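/- arXiv:1410.2666 — 4 statements merged into one kernel-verified Lean document; each statement's English description precedes it below -/
import Mathlib

section
/- For every θ ∈ ℝ and all z₁, z₂, z₃, z₄ ∈ ℂ satisfying the four equations (z₁ − z₄)·e^{iθ} + z₄ = z₂, (z₃ − z₂)·e^{iθ} + z₂ = z₄, (z₃ − z₁)·e^{iθ} + z₁ = z₂, and (z₁ − z₃)·e^{iθ} + z₃ = z₄, one has z₁ = z₂ = z₃ = z₄. -/
/-!
A coloring by rotations through the common angle `θ` is a coloring by the Alexander quandle
`z ↦ (z - w) t + w` with `t = e^{iθ}`. Suitable combinations of the crossing relations give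
`Δ(t) (z₄ - z₁) = 0` and `Δ(t) (z₂ - z₁) = 0`, where `Δ(t) = t² - 3t + 1` is the Alexander
polynomial of the figure eight knot. Its roots `(3 ± √5) / 2` are real and different from `±1`,
so `Δ` does not vanish on the unit circle, and the coloring is trivial.
-/

open Complex ComplexConjugate

namespace Complex

/-- If `z² - 3z + 1 = 0` then `z + z⁻¹ = 3`, while `z + z⁻¹ = 2 Re z ≤ 2` on the unit circle. -/
theorem sq_sub_three_mul_add_one_ne_zero {z : ℂ} (hz : ‖z‖ = 1) : z ^ 2 - 3 * z + 1 ≠ 0 := by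
  intro hroot
  have hconj : z * conj z = 1 := by
    rw [mul_conj, normSq_eq_norm_sq, hz]
    norm_num
  have hsum : z + conj z = 3 := by
    linear_combination conj z * hroot + (3 - z) * hconj
  have hre : 2 * z.re = 3 := by
    rw [add_conj] at hsum
    exact_mod_cast hsum
  linarith [re_le_norm z]

end Complex

section AlexanderColoring

variable {R : Type*} [CommRing R] [NoZeroDivisors R] {t z₁ z₂ z₃ z₄ : R}

theorem figure_eight_alexander_coloring_trivial (ht : t ^ 2 - 3 * t + 1 ≠ 0)
    (h1 : (z₁ - z₄) * t + z₄ = z₂) (h2 : (z₃ - z₂) * t + z₂ = z₄)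
    (h3 : (z₃ - z₁) * t + z₁ = z₂) (h4 : (z₁ - z₃) * t + z₃ = z₄) :
    z₁ = z₂ ∧ z₂ = z₃ ∧ z₃ = z₄ := by
  have cancel : ∀ {a b : R}, (t ^ 2 - 3 * t + 1) * (a - b) = 0 → a = b := fun h =>
    sub_eq_zero.mp ((mul_eq_zero.mp h).resolve_left ht)
  have h41 : z₄ = z₁ := cancel (by linear_combination (2 - t) * h1 + h2 - h3)
  have h21 : z₂ = z₁ := cancel (by linear_combination h1 + (1 - t) * h2 + (t - 1) * h3)
  have hsum : z₁ + z₃ = z₂ + z₄ := by linear_combination h3 + h4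
  exact ⟨h21.symm, by linear_combination -hsum - h41, by linear_combination hsum + h21⟩

end AlexanderColoring

theorem figure_eight_not_colorable (θ : ℝ) (z₁ z₂ z₃ z₄ : ℂ)
    (h1 : (z₁ - z₄) * Complex.exp (θ * Complex.I) + z₄ = z₂)
    (h2 : (z₃ - z₂) * Complex.exp (θ * Complex.I) + z₂ = z₄)
    (h3 : (z₃ - z₁) * Complex.exp (θ * Complex.I) + z₁ = z₂)
    (h4 : (z₁ - z₃) * Complex.exp (θ * Complex.I) + z₃ = z₄) :
    z₁ = z₂ ∧ z₂ = z₃ ∧ z₃ = z₄ :=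
  figure_eight_alexander_coloring_trivial
    (sq_sub_three_mul_add_one_ne_zero (norm_exp_ofReal_mul_I θ)) h1 h2 h3 h4
end

section
/- Let p, q ≥ 2 be coprime integers, let 1 ≤ k ≤ p − 1 and 1 ≤ l ≤ q − 1 be integers, and set θ(p,k;q,l) = π·((p − 2k)/p − (q − 2l)/q). Then there exists a non-constant function z : ℤ × ℤ → ℂ which is periodic with period q in the first variable and with period p in the second variable, such that for all i, j ∈ ℤ: z(i + 1, j − 1) = (z(i, j) − z(i, 0))·e^{iθ(p,k;q,l)} + z(i, 0). -/
/-!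
With `ζ = e^{2πil/q}` and `ω = e^{2πik/p}` one has `e^{iθ(p,k;q,l)} = ζ / ω`, and
`z(i, j) = ζ^i (1 - ζ/ω + (ζ - 1) ω^j)` satisfies the crossing relation with rotation factor
`ζ / ω` identically in `ζ, ω`. Periodicity is `ζ^q = ω^p = 1`, and `z(0, 1) - z(0, 0) = (ζ - 1)(ω - 1)`
is non-zero since `0 < l < q` and `0 < k < p`.
-/

open Complex

section Coloring

variable {K : Type*} [Field K]

def trochoidColoring (a b : K) (i j : ℤ) : K :=
  a ^ i * (1 - a / b + (a - 1) * b ^ j)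

variable {a b : K}

theorem trochoidColoring_crossing (ha : a ≠ 0) (hb : b ≠ 0) (i j : ℤ) :
    trochoidColoring a b (i + 1) (j - 1) =
      (trochoidColoring a b i j - trochoidColoring a b i 0) * (a / b) + trochoidColoring a b i 0 := by
  simp only [trochoidColoring, zpow_add_one₀ ha, zpow_sub_one₀ hb, zpow_zero]
  field_simp
  ring

theorem trochoidColoring_add_left {n : ℤ} (ha : a ≠ 0) (han : a ^ n = 1) (i j : ℤ) :
    trochoidColoring a b (i + n) j = trochoidColoring a b i j := by
  rw [trochoidColoring, zpow_add₀ ha, han, mul_one, trochoidColoring]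

theorem trochoidColoring_add_right {n : ℤ} (hb : b ≠ 0) (hbn : b ^ n = 1) (i j : ℤ) :
    trochoidColoring a b i (j + n) = trochoidColoring a b i j := by
  rw [trochoidColoring, zpow_add₀ hb, hbn, mul_one, trochoidColoring]

theorem trochoidColoring_zero_one_sub_zero_zero :
    trochoidColoring a b 0 1 - trochoidColoring a b 0 0 = (a - 1) * (b - 1) := by
  simp only [trochoidColoring, zpow_zero, zpow_one]
  ring

theorem trochoidColoring_zero_one_ne_zero_zero (ha : a ≠ 1) (hb : b ≠ 1) :
    trochoidColoring a b 0 1 ≠ trochoidColoring a b 0 0 := by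
  rw [← sub_ne_zero, trochoidColoring_zero_one_sub_zero_zero]
  exact mul_ne_zero (sub_ne_zero.mpr ha) (sub_ne_zero.mpr hb)

end Coloring

theorem Complex.exp_two_pi_mul_I_mul_div_zpow_self (m : ℤ) {n : ℤ} (hn : n ≠ 0) :
    exp (2 * Real.pi * I * m / n) ^ n = 1 := by
  rw [← exp_int_mul, mul_div_cancel₀ _ (Int.cast_ne_zero.mpr hn), mul_comm,
    exp_int_mul_two_pi_mul_I]

theorem Complex.exp_two_pi_mul_I_mul_div_ne_one {m n : ℤ} (hm : 0 < m) (hmn : m < n) :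
    exp (2 * Real.pi * I * m / n) ≠ 1 := by
  intro h
  obtain ⟨t, ht⟩ := exp_eq_one_iff.mp h
  have hn : (n : ℂ) ≠ 0 := Int.cast_ne_zero.mpr (by omega)
  have hmt : m = n * t := by
    field_simp at ht
    exact_mod_cast ht
  exact hm.ne' (Int.eq_zero_of_dvd_of_nonneg_of_lt hm.le hmn ⟨t, hmt⟩)

theorem exp_torusKnotAngle_mul_I {p q : ℤ} (hp : p ≠ 0) (hq : q ≠ 0) (k l : ℤ) :
    exp (((Real.pi * (((p : ℝ) - 2 * k) / p - ((q : ℝ) - 2 * l) / q) : ℝ) : ℂ) * I) =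
      exp (2 * Real.pi * I * l / q) / exp (2 * Real.pi * I * k / p) := by
  rw [← exp_sub]
  congr 1
  push_cast
  field_simp
  ring

theorem torus_knot_trochoid_coloring_general (p q k l : ℤ)
    (hp : 2 ≤ p) (hq : 2 ≤ q)
    (hk1 : 1 ≤ k) (hk2 : k ≤ p - 1) (hl1 : 1 ≤ l) (hl2 : l ≤ q - 1) :
    ∃ z : ℤ → ℤ → ℂ,
      (∃ i j i' j', z i j ≠ z i' j') ∧
      (∀ i j, z (i + q) j = z i j) ∧
      (∀ i j, z i (j + p) = z i j) ∧
      (∀ i j, z (i + 1) (j - 1) =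
        (z i j - z i 0) *
          Complex.exp ((Real.pi * (((p : ℝ) - 2 * k) / p - ((q : ℝ) - 2 * l) / q) : ℝ) * Complex.I)
        + z i 0) := by
  have hp0 : p ≠ 0 := by omega
  have hq0 : q ≠ 0 := by omega
  set ζ := exp (2 * Real.pi * I * l / q)
  set ω := exp (2 * Real.pi * I * k / p)
  refine ⟨trochoidColoring ζ ω, ⟨0, 1, 0, 0, ?_⟩, ?_, ?_, ?_⟩
  · exact trochoidColoring_zero_one_ne_zero_zero
      (exp_two_pi_mul_I_mul_div_ne_one (by omega) (by omega))
      (exp_two_pi_mul_I_mul_div_ne_one (by omega) (by omega))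
  · exact trochoidColoring_add_left (exp_ne_zero _) (exp_two_pi_mul_I_mul_div_zpow_self l hq0)
  · exact trochoidColoring_add_right (exp_ne_zero _) (exp_two_pi_mul_I_mul_div_zpow_self k hp0)
  · rw [exp_torusKnotAngle_mul_I hp0 hq0]
    exact trochoidColoring_crossing (exp_ne_zero _) (exp_ne_zero _)

theorem torus_knot_trochoid_coloring (p q k l : ℤ)
    (hp : 2 ≤ p) (hq : 2 ≤ q) (hpq : IsCoprime p q)
    (hk1 : 1 ≤ k) (hk2 : k ≤ p - 1) (hl1 : 1 ≤ l) (hl2 : l ≤ q - 1) :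
    ∃ z : ℤ → ℤ → ℂ,
      (∃ i j i' j', z i j ≠ z i' j') ∧
      (∀ i j, z (i + q) j = z i j) ∧
      (∀ i j, z i (j + p) = z i j) ∧
      (∀ i j, z (i + 1) (j - 1) =
        (z i j - z i 0) *
          Complex.exp ((Real.pi * (((p : ℝ) - 2 * k) / p - ((q : ℝ) - 2 * l) / q) : ℝ) * Complex.I)
        + z i 0) :=
  torus_knot_trochoid_coloring_general p q k l hp hq hk1 hk2 hl1 hl2
end

section
/- Let p, q ≥ 2 be coprime integers and set θ(p,k;q,l) = π·((p − 2k)/p − (q − 2l)/q) for integers 1 ≤ k ≤ p − 1 and 1 ≤ l ≤ q − 1. Then in ℂ[X] one has the polynomial identity (X^{pq} − 1)·(X − 1) = (X^p − 1)·(X^q − 1)·∏_{k=1}^{p−1} ∏_{l=1}^{q−1} (X − exp(iθ(p,k;q,l))). Equivalently, the Alexander polynomial Δ_{T(p,q)}(t) = (t^{pq} − 1)(t − 1)/((t^p − 1)(t^q − 1)) of the (p, q)-torus knot factors completely as ∏_{k=1}^{p−1} ∏_{l=1}^{q−1} (t − exp(iθ(p,k;q,l))). -/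
open Complex Polynomial

/-!
Write `ω_n = exp (2πi / n)`. Then `exp (i θ(p,k;q,l)) = ω_p⁻¹ ^ k * ω_q ^ l`, and since `p` and `q`
are coprime the `p q` numbers `ω_p⁻¹ ^ k * ω_q ^ l` with `0 ≤ k < p`, `0 ≤ l < q` are exactly the
`p q`-th roots of unity, so `X ^ (p q) - 1` is the product of the corresponding linear factors.
The factors with `k = 0` multiply to `X ^ q - 1`, those with `l = 0` to `X ^ p - 1`; the two
families share only `X - 1` (at `k = l = 0`), and the remaining factors are those of the theorem.
-/

namespace IsPrimitiveRoot

variable {M : Type*} [CommMonoid M] {α β : M} {p q : ℕ}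

theorem mul_of_coprime (hα : IsPrimitiveRoot α p) (hβ : IsPrimitiveRoot β q)
    (hpq : p.Coprime q) : IsPrimitiveRoot (α * β) (p * q) := by
  rw [hα.eq_orderOf, hβ.eq_orderOf] at hpq ⊢
  exact .iff_orderOf.2 ((Commute.all α β).orderOf_mul_eq_mul_orderOf_of_coprime hpq)

theorem injOn_pow_mul_pow (hα : IsPrimitiveRoot α p) (hβ : IsPrimitiveRoot β q)
    (hpq : p.Coprime q) :
    Set.InjOn (fun kl : ℕ × ℕ ↦ α ^ kl.1 * β ^ kl.2)
      (Finset.range p ×ˢ Finset.range q : Finset (ℕ × ℕ)) := by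
  rintro ⟨k, l⟩ hkl ⟨k', l'⟩ hkl' h
  simp only [Finset.coe_product, Finset.coe_range, Set.mem_prod, Set.mem_Iio] at hkl hkl'
  -- raising to the power `q` kills `β` and leaves the primitive `p`-th root `α ^ q`
  have hk : (α ^ q) ^ k = (α ^ q) ^ k' := by
    simpa [mul_pow, ← pow_mul, mul_comm _ q, pow_mul β q, hβ.pow_eq_one] using congrArg (· ^ q) h
  have hl : (β ^ p) ^ l = (β ^ p) ^ l' := by
    simpa [mul_pow, ← pow_mul, mul_comm _ p, pow_mul α p, hα.pow_eq_one] using congrArg (· ^ p) h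
  simp only [Prod.mk.injEq]
  exact ⟨(hα.pow_of_coprime q hpq.symm).pow_inj hkl.1 hkl'.1 hk,
    (hβ.pow_of_coprime p hpq).pow_inj hkl.2 hkl'.2 hl⟩

end IsPrimitiveRoot

theorem Finset.prod_range_eq_mul_prod_Icc {M : Type*} [CommMonoid M] (f : ℕ → M) {n : ℕ}
    (hn : 0 < n) :
    ∏ k ∈ Finset.range n, f k = f 0 * ∏ k ∈ Finset.Icc 1 (n - 1), f k := by
  rw [Finset.range_eq_Ico, Finset.prod_eq_prod_Ico_succ_bot hn,
    Finset.Icc_sub_one_right_eq_Ico_of_not_isMin (by simpa using hn.ne')]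

section

variable {R : Type*} [CommRing R] [IsDomain R] {α β : R} {p q : ℕ}

theorem X_pow_mul_sub_one_eq_prod_prod (hα : IsPrimitiveRoot α p) (hβ : IsPrimitiveRoot β q)
    (hpq : p.Coprime q) (hp : 0 < p) (hq : 0 < q) :
    (X : R[X]) ^ (p * q) - 1 =
      ∏ k ∈ Finset.range p, ∏ l ∈ Finset.range q, (X - C (α ^ k * β ^ l)) := by
  classical
  have hαβ := hα.mul_of_coprime hβ hpq
  have hinj := hα.injOn_pow_mul_pow hβ hpq
  -- the `p * q` products `α ^ k * β ^ l` are distinct roots of `X ^ (p * q) - 1`, hence all of them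
  have hroots : Polynomial.nthRootsFinset (p * q) (1 : R) =
      (Finset.range p ×ˢ Finset.range q).image (fun kl ↦ α ^ kl.1 * β ^ kl.2) := by
    refine (Finset.eq_of_subset_of_card_le ?_ ?_).symm
    · simp only [Finset.image_subset_iff, Finset.mem_product, Finset.mem_range,
        Polynomial.mem_nthRootsFinset (Nat.mul_pos hp hq)]
      intro kl _
      rw [mul_pow, ← pow_mul, ← pow_mul,
        (hα.pow_eq_one_iff_dvd _).2 (dvd_mul_of_dvd_right (dvd_mul_right p q) _),
        (hβ.pow_eq_one_iff_dvd _).2 (dvd_mul_of_dvd_right (dvd_mul_left q p) _), one_mul]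
    · rw [hαβ.card_nthRootsFinset, Finset.card_image_of_injOn hinj, Finset.card_product,
        Finset.card_range, Finset.card_range]
  rw [X_pow_sub_one_eq_prod (Nat.mul_pos hp hq) hαβ, hroots, Finset.prod_image hinj,
    Finset.prod_product]

theorem X_pow_sub_one_eq_prod_range (hα : IsPrimitiveRoot α p) (hp : 0 < p) :
    (X : R[X]) ^ p - 1 = ∏ k ∈ Finset.range p, (X - C (α ^ k)) := by
  simpa using
    X_pow_mul_sub_one_eq_prod_prod hα IsPrimitiveRoot.one (Nat.coprime_one_right p) hp one_pos

theorem X_pow_mul_sub_one_mul_X_sub_one (hα : IsPrimitiveRoot α p) (hβ : IsPrimitiveRoot β q)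
    (hpq : p.Coprime q) (hp : 0 < p) (hq : 0 < q) :
    ((X : R[X]) ^ (p * q) - 1) * (X - 1) =
      (X ^ p - 1) * (X ^ q - 1) *
        ∏ k ∈ Finset.Icc 1 (p - 1), ∏ l ∈ Finset.Icc 1 (q - 1), (X - C (α ^ k * β ^ l)) := by
  set F : ℕ → ℕ → R[X] := fun k l ↦ X - C (α ^ k * β ^ l)
  set P := ∏ k ∈ Finset.Icc 1 (p - 1), ∏ l ∈ Finset.Icc 1 (q - 1), F k l
  set Q := ∏ k ∈ Finset.Icc 1 (p - 1), F k 0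
  have hcol : ∏ k ∈ Finset.range p, F k 0 = X ^ p - 1 := by
    simp [F, X_pow_sub_one_eq_prod_range hα hp]
  have hrow : ∏ l ∈ Finset.range q, F 0 l = X ^ q - 1 := by
    simp [F, X_pow_sub_one_eq_prod_range hβ hq]
  have hfull : (X : R[X]) ^ (p * q) - 1 = (X ^ q - 1) * Q * P := by
    rw [X_pow_mul_sub_one_eq_prod_prod hα hβ hpq hp hq, Finset.prod_range_eq_mul_prod_Icc _ hp,
      hrow, Finset.prod_congr rfl fun k _ ↦ Finset.prod_range_eq_mul_prod_Icc (F k) hq,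
      Finset.prod_mul_distrib, mul_assoc]
  have hp_sub_one : (X : R[X]) ^ p - 1 = (X - 1) * Q := by
    simp [← hcol, Finset.prod_range_eq_mul_prod_Icc _ hp, F, Q]
  linear_combination (X - 1) * hfull - (X ^ q - 1) * P * hp_sub_one

end

theorem exp_angle_eq_inv_pow_mul_pow {p q : ℕ} (hp : p ≠ 0) (hq : q ≠ 0) (k l : ℕ) :
    Complex.exp ((Real.pi * (((p : ℝ) - 2 * k) / p - ((q : ℝ) - 2 * l) / q) : ℝ) * Complex.I) =
      (Complex.exp (2 * Real.pi * Complex.I / p))⁻¹ ^ k *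
        Complex.exp (2 * Real.pi * Complex.I / q) ^ l := by
  rw [← Complex.exp_neg, ← Complex.exp_nat_mul, ← Complex.exp_nat_mul, ← Complex.exp_add]
  congr 1
  push_cast
  field_simp
  ring

theorem torus_knot_alexander_factorization (p q : ℕ)
    (hp : 2 ≤ p) (hq : 2 ≤ q) (hpq : Nat.Coprime p q) :
    ((X : ℂ[X]) ^ (p * q) - 1) * (X - 1) =
      ((X : ℂ[X]) ^ p - 1) * (X ^ q - 1) *
        ∏ k ∈ Finset.Icc 1 (p - 1), ∏ l ∈ Finset.Icc 1 (q - 1),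
          (X - C (Complex.exp
            ((Real.pi * (((p : ℝ) - 2 * k) / p - ((q : ℝ) - 2 * l) / q) : ℝ) * Complex.I))) := by
  have hp0 : 0 < p := by omega
  have hq0 : 0 < q := by omega
  simp_rw [exp_angle_eq_inv_pow_mul_pow hp0.ne' hq0.ne']
  exact X_pow_mul_sub_one_mul_X_sub_one (Complex.isPrimitiveRoot_exp p hp0.ne').inv
    (Complex.isPrimitiveRoot_exp q hq0.ne') hpq hp0 hq0
end

section
/- Let p, q ≥ 2 be coprime integers. Then the (p − 1)(q − 1) complex numbers exp(iθ(p,k;q,l)) with 1 ≤ k ≤ p − 1 and 1 ≤ l ≤ q − 1 are mutually distinct; that is, the map (k, l) ↦ exp(i·π·((p − 2k)/p − (q − 2l)/q)) is injective on {1, …, p − 1} × {1, …, q − 1}. -/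
open Complex

/-!
Since `θ(p,k;q,l) = 2π (p l - q k) / (p q)`, two of the roots coincide exactly when
`p q ∣ q (k' - k) + p (l - l')`. By coprimality this forces `p ∣ k' - k` and `q ∣ l - l'`,
and the ranges of `k` and `l` leave no room for nonzero multiples.
-/

/-- The paper's angle `θ(p,k;q,l)`. -/
noncomputable def torusAngle (p k q l : ℝ) : ℝ :=
  Real.pi * ((p - 2 * k) / p - (q - 2 * l) / q)

theorem exp_ofReal_mul_I_eq_exp_ofReal_mul_I_iff {x y : ℝ} :
    exp (x * I) = exp (y * I) ↔ ∃ m : ℤ, x = y + m * (2 * Real.pi) := by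
  rw [← Circle.coe_exp, ← Circle.coe_exp, Circle.coe_inj, Circle.exp_eq_exp]

theorem IsCoprime.dvd_and_dvd_of_mul_dvd_mul_add_mul {R : Type*} [CommRing R] {a b x y : R}
    (hab : IsCoprime a b) (h : a * b ∣ b * x + a * y) : a ∣ x ∧ b ∣ y := by
  constructor
  · refine hab.dvd_of_dvd_mul_left ((dvd_add_left (dvd_mul_right a y)).1 ?_)
    exact (dvd_mul_right a b).trans h
  · refine hab.symm.dvd_of_dvd_mul_left ((dvd_add_right (dvd_mul_right b x)).1 ?_)
    exact (dvd_mul_left b a).trans h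

theorem mul_dvd_of_torusAngle_eq_add_int_mul_two_pi {p q k l k' l' : ℕ} {m : ℤ}
    (hp : p ≠ 0) (hq : q ≠ 0)
    (h : torusAngle p k q l = torusAngle p k' q l' + m * (2 * Real.pi)) :
    (p * q : ℤ) ∣ q * (k' - k) + p * (l - l') := by
  refine ⟨m, ?_⟩
  have hp' : (p : ℝ) ≠ 0 := Nat.cast_ne_zero.2 hp
  have hq' : (q : ℝ) ≠ 0 := Nat.cast_ne_zero.2 hq
  have h' : ((p : ℝ) - 2 * k) / p - (q - 2 * l) / q
      = ((p : ℝ) - 2 * k') / p - (q - 2 * l') / q + 2 * m := by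
    unfold torusAngle at h
    apply mul_left_cancel₀ Real.pi_ne_zero
    linarith
  field_simp at h'
  exact_mod_cast (by linarith : (q : ℝ) * (k' - k) + p * (l - l') = p * q * m)

theorem torus_knot_roots_distinct_general (p q : ℕ)
    (hpq : Nat.Coprime p q) :
    Set.InjOn
      (fun kl : ℕ × ℕ => Complex.exp
        ((Real.pi * (((p : ℝ) - 2 * kl.1) / p - ((q : ℝ) - 2 * kl.2) / q) : ℝ) * Complex.I))
      (Set.Icc 1 (p - 1) ×ˢ Set.Icc 1 (q - 1)) := by
  rintro ⟨k, l⟩ ⟨⟨hk, hkp⟩, hl, hlq⟩ ⟨k', l'⟩ ⟨⟨hk', hkp'⟩, hl', hlq'⟩ h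
  obtain ⟨m, hm⟩ := exp_ofReal_mul_I_eq_exp_ofReal_mul_I_iff.1 h
  have hdvd := mul_dvd_of_torusAngle_eq_add_int_mul_two_pi (by omega) (by omega) hm
  obtain ⟨hpk, hql⟩ :=
    (Nat.isCoprime_iff_coprime.2 hpq).dvd_and_dvd_of_mul_dvd_mul_add_mul hdvd
  have hkk' : k = k' := (Nat.modEq_iff_dvd.2 hpk).eq_of_lt_of_lt (by omega) (by omega)
  have hl'l : l' = l := (Nat.modEq_iff_dvd.2 hql).eq_of_lt_of_lt (by omega) (by omega)
  rw [hkk', hl'l]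

theorem torus_knot_roots_distinct (p q : ℕ)
    (hp : 2 ≤ p) (hq : 2 ≤ q) (hpq : Nat.Coprime p q) :
    Set.InjOn
      (fun kl : ℕ × ℕ => Complex.exp
        ((Real.pi * (((p : ℝ) - 2 * kl.1) / p - ((q : ℝ) - 2 * kl.2) / q) : ℝ) * Complex.I))
      (Set.Icc 1 (p - 1) ×ˢ Set.Icc 1 (q - 1)) :=
  torus_knot_roots_distinct_general p q hpq
end
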